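/- Let λ be a weight diagram (f_λ : ℤ → {0,1} with n ones). Define ▲(λ) as the set of weight diagrams μ with n ones such that for every i ∈ c_λ: f_μ(i) + Σ_{j ∈ ⟵i▲(λ)} f_μ(j) = 1; and ▼(λ) as the set of weight diagrams μ with n ones such that for every j ∉ c_λ: (1 - f_μ(j)) + Σ_{i ∈ j⇢▼(λ)} (1 - f_μ(i)) = 1. Then ▲(λ) ∩ ▼(λ) = {λ}. -/

import Mathlib

/-! If `μ ∈ ▲(λ) ∩ ▼(λ)` misses a ball `i` of `λ`, the solid arrow from `i` leads to a ball `p`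
of `μ` sitting at a hole of `λ`, and the dashed arrow from `p` leads to a hole of `μ` sitting at a
ball of `λ`. Solid and dashed arrows are nested, so that second position lies strictly left of `i`.
Infinite descent in the finite set of balls of `λ` makes every ball of `λ` a ball of `μ`, and
since both have `n` balls, `μ = λ`. -/

/-- The ±1 marker of a weight diagram `f : ℤ → {0,1}`: `g(i) = (-1)^(f(i)+1)`,
i.e. `1` on black balls and `-1` on empty positions. -/
def bg (f : ℤ → ℤ) (i : ℤ) : ℤ := if f i = 1 then 1 else -1

/-- `r⁺(i,j) = Σ_{s=j}^{i-1} g(s)`. -/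
noncomputable def rpl (f : ℤ → ℤ) (i j : ℤ) : ℤ := ∑ s ∈ Finset.Icc j (i - 1), bg f s

/-- `r⁻(i,j) = -Σ_{s=j+1}^{i} g(s)`. -/
noncomputable def rmi (f : ℤ → ℤ) (i j : ℤ) : ℤ := -∑ s ∈ Finset.Icc (j + 1) i, bg f s

/-- The set `⟵i▲(f)` of targets of solid arrows starting at position `i`:
`{j < i : r⁺(i,j) = 0 and r⁺(i,s) ≥ 0 for all j < s < i}`. -/
def solidT (f : ℤ → ℤ) (i : ℤ) : Set ℤ :=
  {j | j < i ∧ rpl f i j = 0 ∧ ∀ s, j < s → s < i → 0 ≤ rpl f i s}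

/-- The set `j⇢▼(f)` of targets of dashed arrows starting at position `j`:
`{i > j : r⁻(i,j) = 0 and r⁻(s,j) ≥ 0 for all j < s < i}`. -/
def dashT (f : ℤ → ℤ) (j : ℤ) : Set ℤ :=
  {i | j < i ∧ rmi f i j = 0 ∧ ∀ s, j < s → s < i → 0 ≤ rmi f s j}

/-- `f : ℤ → ℤ` is a weight diagram with `n` black balls: it takes values in `{0,1}`
and has exactly `n` positions with value `1`. -/
def IsWD (f : ℤ → ℤ) (n : ℕ) : Prop :=
  (∀ i, f i = 0 ∨ f i = 1) ∧ {i | f i = 1}.Finite ∧ {i | f i = 1}.ncard = n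

/-- `μ ∈ ▲(fl)`: `μ` is a weight diagram with `n` balls such that for every black ball
`i` of `fl`, exactly one position among `{i} ∪ ⟵i▲(fl)` carries a black ball of `μ`
(this is the condition `f_μ(i) + Σ_{j ∈ ⟵i▲(fl)} f_μ(j) = 1`). -/
def inUp (fl : ℤ → ℤ) (n : ℕ) (μ : ℤ → ℤ) : Prop :=
  IsWD μ n ∧ ∀ i, fl i = 1 → ∃! p, (p = i ∨ p ∈ solidT fl i) ∧ μ p = 1

/-- `μ ∈ ▼(fl)`: `μ` is a weight diagram with `n` balls such that for every empty
position `j` of `fl`, exactly one position among `{j} ∪ j⇢▼(fl)` is empty in `μ`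
(this is the condition `(1 - f_μ(j)) + Σ_{i ∈ j⇢▼(fl)} (1 - f_μ(i)) = 1`). -/
def inDown (fl : ℤ → ℤ) (n : ℕ) (μ : ℤ → ℤ) : Prop :=
  IsWD μ n ∧ ∀ j, fl j ≠ 1 → ∃! p, (p = j ∨ p ∈ dashT fl j) ∧ μ p ≠ 1

variable {f : ℤ → ℤ} {i j : ℤ}

lemma rpl_self (f : ℤ → ℤ) (i : ℤ) : rpl f i i = 0 := by
  simp [rpl]

lemma rmi_self (f : ℤ → ℤ) (j : ℤ) : rmi f j j = 0 := by
  simp [rmi]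

lemma rpl_eq_bg_add (hji : j < i) : rpl f i j = bg f j + rpl f i (j + 1) := by
  rw [rpl, rpl, ← Finset.add_sum_Ioc_eq_sum_Icc (by omega), Finset.Icc_add_one_left_eq_Ioc]

lemma rmi_eq_sub_bg (hji : j < i) : rmi f i j = rmi f (i - 1) j - bg f i := by
  rw [rmi, rmi, ← Finset.sum_Ico_add_eq_sum_Icc (by omega), Finset.Icc_sub_one_right_eq_Ico]
  ring

lemma rmi_sub_one_eq_neg_rpl (f : ℤ → ℤ) (i j : ℤ) : rmi f (i - 1) j = -rpl f i (j + 1) := rfl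

lemma rpl_add_one_eq_one_of_mem_solidT (h : j ∈ solidT f i) : rpl f i (j + 1) = 1 := by
  obtain ⟨hji, hzero, hnonneg⟩ := h
  have hnext : 0 ≤ rpl f i (j + 1) := by
    rcases (show j + 1 < i ∨ j + 1 = i by omega) with hlt | rfl
    · exact hnonneg _ (lt_add_one j) hlt
    · rw [rpl_self]
  have hsplit := rpl_eq_bg_add (f := f) hji
  unfold bg at hsplit
  split_ifs at hsplit <;> omega

lemma ne_one_of_mem_solidT (h : j ∈ solidT f i) : f j ≠ 1 := by
  intro hfj
  have hsplit := rpl_eq_bg_add (f := f) h.1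
  rw [h.2.1, rpl_add_one_eq_one_of_mem_solidT h, bg, if_pos hfj] at hsplit
  omega

lemma eq_one_of_mem_dashT (h : i ∈ dashT f j) : f i = 1 := by
  obtain ⟨hji, hzero, hnonneg⟩ := h
  have hprev : 0 ≤ rmi f (i - 1) j := by
    rcases (show j < i - 1 ∨ j = i - 1 by omega) with hlt | heq
    · exact hnonneg _ hlt (by omega)
    · rw [← heq, rmi_self]
  have hsplit := rmi_eq_sub_bg (f := f) hji
  unfold bg at hsplit
  split_ifs at hsplit with hfi
  · exact hfi
  · omega

lemma lt_of_mem_dashT_of_mem_solidT {i' : ℤ} (hj : j ∈ solidT f i) (hi' : i' ∈ dashT f j) :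
    i' < i := by
  by_contra! hle
  have hone := rpl_add_one_eq_one_of_mem_solidT hj
  have hji : j < i - 1 := by
    by_contra
    rw [show j + 1 = i by linarith [hj.1], rpl_self] at hone
    omega
  have hnonneg := hi'.2.2 (i - 1) hji (by omega)
  rw [rmi_sub_one_eq_neg_rpl, hone] at hnonneg
  omega

section Descent

variable {fl μ : ℤ → ℤ}
  (hup : ∀ i, fl i = 1 → ∃ p, (p = i ∨ p ∈ solidT fl i) ∧ μ p = 1)
  (hdown : ∀ j, fl j ≠ 1 → ∃ p, (p = j ∨ p ∈ dashT fl j) ∧ μ p ≠ 1)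
include hup hdown

lemma exists_lt_eq_one_ne_one (hi : fl i = 1) (hμi : μ i ≠ 1) :
    ∃ i' < i, fl i' = 1 ∧ μ i' ≠ 1 := by
  obtain ⟨p, hp, hμp⟩ := hup i hi
  have hp : p ∈ solidT fl i := hp.resolve_left (by rintro rfl; exact hμi hμp)
  obtain ⟨q, hq, hμq⟩ := hdown p (ne_one_of_mem_solidT hp)
  have hq : q ∈ dashT fl p := hq.resolve_left (by rintro rfl; exact hμq hμp)
  exact ⟨q, lt_of_mem_dashT_of_mem_solidT hp hq, eq_one_of_mem_dashT hq, hμq⟩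

lemma setOf_eq_one_subset (hfin : {i | fl i = 1}.Finite) :
    {i | fl i = 1} ⊆ {i | μ i = 1} := by
  intro i hi
  by_contra hμi
  obtain ⟨a, ⟨hfa, hμa⟩, hmin⟩ := Set.exists_min_image {i | fl i = 1 ∧ μ i ≠ 1} id
    (hfin.subset fun _ h => h.1) ⟨i, hi, hμi⟩
  obtain ⟨b, hba, hfb, hμb⟩ := exists_lt_eq_one_ne_one hup hdown hfa hμa
  exact (hmin b ⟨hfb, hμb⟩).not_gt hba

end Descent

lemma IsWD.eq_of_setOf_subset {g : ℤ → ℤ} {n : ℕ} (hf : IsWD f n) (hg : IsWD g n)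
    (hsub : {i | f i = 1} ⊆ {i | g i = 1}) : f = g := by
  have hset := Set.eq_of_subset_of_ncard_le hsub (hg.2.2.trans hf.2.2.symm).le hg.2.1
  funext i
  have hiff : f i = 1 ↔ g i = 1 := Set.ext_iff.mp hset i
  rcases hf.1 i with h | h <;> rcases hg.1 i with h' | h' <;> omega

lemma inUp_self {n : ℕ} (hf : IsWD f n) : inUp f n f :=
  ⟨hf, fun i hi => ⟨i, ⟨Or.inl rfl, hi⟩, fun _ ⟨hp, hfp⟩ =>
    hp.resolve_right fun hs => ne_one_of_mem_solidT hs hfp⟩⟩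

lemma inDown_self {n : ℕ} (hf : IsWD f n) : inDown f n f :=
  ⟨hf, fun j hj => ⟨j, ⟨Or.inl rfl, hj⟩, fun _ ⟨hp, hfp⟩ =>
    hp.resolve_right fun hd => hfp (eq_one_of_mem_dashT hd)⟩⟩

/-- For any weight diagram `λ` with `n` black balls, `▲(λ) ∩ ▼(λ) = {λ}`. -/
theorem stmt8 (n : ℕ) (fl : ℤ → ℤ) (hfl : IsWD fl n) :
    {μ : ℤ → ℤ | inUp fl n μ ∧ inDown fl n μ} = {fl} := by
  ext μ
  constructor
  · rintro ⟨hup, hdown⟩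
    exact (hfl.eq_of_setOf_subset hup.1 (setOf_eq_one_subset
      (fun i hi => (hup.2 i hi).exists) (fun j hj => (hdown.2 j hj).exists) hfl.2.1)).symm
  · rintro rfl
    exact ⟨inUp_self hfl, inDown_self hfl⟩
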